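/- Let X be a finite T₀-space and x ∈ X a point whose link Ĉ_x is a collapsible finite space (but not necessarily contractible). Then the order complex K(X) simplicially collapses to K(X ∖ {x}). -/

import Mathlib

/-!
STATEMENT 5: Let X be a finite T₀-space and x ∈ X a point whose link Ĉ_x is a collapsible
finite space (not necessarily contractible). Then the order complex K(X) simplicially
collapses to K(X ∖ {x}).

A finite T₀-space is identified with a finite poset with the down-set topology; the link
of x is Ĉ_x = {y | y < x ∨ y > x} with the subspace topology.  Collapsibility of a finite
space means that it collapses to a one-point space by successively removing weak points.
-/

noncomputable section

/-- The Alexandrov "down-set" topology on a poset: open sets are the lower sets. -/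
def downTop (X : Type*) [Preorder X] : TopologicalSpace X := Topology.lowerSet X

/-- A subset of a poset is contractible when, with the subspace topology coming from the
down-set topology, it is homotopy equivalent to a point. -/
def SubContractible {X : Type*} [Preorder X] (A : Set X) : Prop :=
  @ContractibleSpace A (TopologicalSpace.induced Subtype.val (downTop X))

/-- `x` is a weak point of the subspace `A`: the set of points of `A` strictly below `x`
or the set of points of `A` strictly above `x` is contractible. -/
def IsWeakPointIn {X : Type*} [PartialOrder X] (A : Set X) (x : X) : Prop :=
  x ∈ A ∧ (SubContractible {y | y ∈ A ∧ y < x} ∨ SubContractible {y | y ∈ A ∧ x < y})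

/-- Elementary collapse of finite spaces: removal of a single weak point. -/
def ElemSpaceCollapse {X : Type*} [PartialOrder X] (A B : Set X) : Prop :=
  ∃ x, IsWeakPointIn A x ∧ B = A \ {x}

/-- The finite space `A` collapses to `B`: a finite sequence of elementary collapses. -/
def SpaceCollapses {X : Type*} [PartialOrder X] (A B : Set X) : Prop :=
  Relation.ReflTransGen ElemSpaceCollapse A B

/-- The finite space `A` is collapsible: it collapses to a one-point subspace. -/
def SpaceCollapsible {X : Type*} [PartialOrder X] (A : Set X) : Prop :=
  ∃ y ∈ A, SpaceCollapses A {y}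

/-- Elementary simplicial collapse: remove a free pair `(σ, τ)`, where `τ` is a proper
face of `σ` and of no other simplex of `K`. -/
def ElemSCollapse {V : Type*} [DecidableEq V] (K L : Finset (Finset V)) : Prop :=
  ∃ σ ∈ K, ∃ τ ∈ K, τ ⊂ σ ∧ (∀ ρ ∈ K, τ ⊂ ρ → ρ = σ) ∧ L = (K.erase σ).erase τ

/-- `K` collapses simplicially to `L`: a finite sequence of elementary collapses. -/
def SCollapses {V : Type*} [DecidableEq V] (K L : Finset (Finset V)) : Prop :=
  Relation.ReflTransGen ElemSCollapse K L

open scoped Classical in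
/-- The full subcomplex of the order complex of the poset `X` spanned by a subset `A`:
its simplices are the nonempty chains of `X` contained in `A`. -/
def orderComplexIn (X : Type*) [Preorder X] [Fintype X] (A : Set X) : Finset (Finset X) :=
  Finset.univ.filter fun σ => σ.Nonempty ∧ IsChain (· ≤ ·) (σ : Set X) ∧ ↑σ ⊆ A


/-!
Write `K_A` for the subcomplex `restrictStar (orderComplexIn X univ) {x} A` of `K(X)`, i.e.
`K(X ∖ {x}) ∪ x * K(A)`; then `K(X) = K_{Ĉ_x}`, and removing a weak point `z` of `A ⊆ Ĉ_x` deletes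
the simplices through both `x` and `z`. The points of `Ĉ_z ∩ A` below `z` or those above `z` form
a contractible space `U`, which is dismantlable: a contractible finite space without beat points
is a point, since a contracting homotopy gives a fence of comparable monotone self-maps from the
identity to a constant, and a monotone map comparable with the identity but different from it
exhibits a beat point. Removing a beat point `b` of `U` dominated by `c` is the collapse of the
simplices through `x, z, b`, which form a cone with apex `c`; once `U = {w}`, the simplices
through `x, z` form a cone with apex `w`. In the end `A = {y}`, and the simplices through `x` form
a cone with apex `y`.
-/

open Relation

section SimplicialComplex

variable {V : Type*} [DecidableEq V] {K : Finset (Finset V)} {S σ τ : Finset V} {c : V}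
  {W : Set V}

lemma Finset.insert_eq_insert_iff (hc : c ∉ σ) :
    insert c τ = insert c σ ↔ τ = σ ∨ τ = insert c σ := by
  constructor
  · intro h
    by_cases hcτ : c ∈ τ
    · exact Or.inr (by rw [← h, Finset.insert_eq_of_mem hcτ])
    · exact Or.inl (by rw [← Finset.erase_insert hcτ, h, Finset.erase_insert hc])
  · rintro (rfl | rfl) <;> simp

def StarIsCone (K : Finset (Finset V)) (S : Finset V) (c : V) : Prop :=
  ∀ σ ∈ K, S ⊆ σ → insert c σ ∈ K ∧ σ.erase c ∈ K

lemma StarIsCone.filter_insert_ne (hK : StarIsCone K S c) (ρ : Finset V) :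
    StarIsCone (K.filter fun τ => insert c τ ≠ ρ) S c := by
  intro σ hσ hSσ
  rw [Finset.mem_filter] at hσ
  obtain ⟨hins, hers⟩ := hK σ hσ.1 hSσ
  refine ⟨Finset.mem_filter.2 ⟨hins, ?_⟩, Finset.mem_filter.2 ⟨hers, ?_⟩⟩
  · rw [Finset.insert_idem]; exact hσ.2
  · rw [show insert c (σ.erase c) = insert c σ by grind]; exact hσ.2

/-- The filter removes exactly `σ` and `insert c σ`. -/
lemma StarIsCone.elemSCollapse (hcS : c ∉ S) (hK : StarIsCone K S c)
    (hσ : Maximal (fun τ => τ ∈ K ∧ S ⊆ τ ∧ c ∉ τ) σ) :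
    ElemSCollapse K (K.filter fun τ => insert c τ ≠ insert c σ) := by
  obtain ⟨⟨hσK, hSσ, hcσ⟩, hmax⟩ := hσ
  refine ⟨insert c σ, (hK σ hσK hSσ).1, σ, hσK, Finset.ssubset_insert hcσ, ?_, ?_⟩
  · intro ρ hρK hσρ
    have hSρ : S ⊆ ρ := hSσ.trans hσρ.subset
    have hσρ' : σ ⊆ ρ.erase c := fun a ha =>
      Finset.mem_erase.2 ⟨fun h => hcσ (h ▸ ha), hσρ.subset ha⟩
    have hρσ := hmax ⟨(hK ρ hρK hSρ).2, Finset.subset_erase.2 ⟨hSρ, hcS⟩,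
      Finset.notMem_erase c ρ⟩ hσρ'
    have hcρ : c ∈ ρ := by
      by_contra h
      rw [Finset.erase_eq_of_notMem h] at hρσ
      exact hσρ.not_subset hρσ
    rw [← Finset.insert_erase hcρ, hρσ.antisymm hσρ']
  · ext τ
    simp only [Finset.mem_erase, Finset.mem_filter, ne_eq, Finset.insert_eq_insert_iff hcσ]
    tauto

theorem StarIsCone.sCollapses (hcS : c ∉ S) (hK : StarIsCone K S c) :
    SCollapses K (K.filter fun σ => ¬ S ⊆ σ) := by
  induction K using Finset.strongInduction with
  | H K ih =>
  by_cases hstar : ∃ σ ∈ K, S ⊆ σ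
  · obtain ⟨ρ, hρK, hSρ⟩ := hstar
    obtain ⟨σ, hσ⟩ := Set.Finite.exists_maximal (s := {τ | τ ∈ K ∧ S ⊆ τ ∧ c ∉ τ})
      (K.finite_toSet.subset fun τ hτ => hτ.1)
      ⟨ρ.erase c, (hK ρ hρK hSρ).2, Finset.subset_erase.2 ⟨hSρ, hcS⟩, Finset.notMem_erase c ρ⟩
    have hsub : K.filter (fun τ => insert c τ ≠ insert c σ) ⊂ K :=
      Finset.filter_ssubset.2 ⟨σ, hσ.1.1, not_not.2 rfl⟩
    have hfilter : (K.filter fun τ => insert c τ ≠ insert c σ).filter (fun τ => ¬ S ⊆ τ) =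
        K.filter fun τ => ¬ S ⊆ τ := by
      rw [Finset.filter_filter]
      refine Finset.filter_congr fun τ _ => and_iff_right_of_imp fun hτ h => hτ ?_
      rcases (Finset.insert_eq_insert_iff hσ.1.2.2).1 h with rfl | rfl
      exacts [hσ.1.2.1, hσ.1.2.1.trans (Finset.subset_insert _ _)]
    exact .head (hK.elemSCollapse hcS hσ) (hfilter ▸ ih _ hsub (hK.filter_insert_ne _))
  · push Not at hstar
    rw [Finset.filter_true_of_mem hstar]
    exact .refl

open Classical in
def restrictStar (K : Finset (Finset V)) (S : Finset V) (W : Set V) : Finset (Finset V) :=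
  K.filter fun σ => S ⊆ σ → ↑σ ⊆ ↑S ∪ W

@[simp]
lemma mem_restrictStar :
    σ ∈ restrictStar K S W ↔ σ ∈ K ∧ (S ⊆ σ → ↑σ ⊆ ↑S ∪ W) := by
  simp [restrictStar]

lemma restrictStar_eq_self (h : ∀ σ ∈ K, S ⊆ σ → ↑σ ⊆ ↑S ∪ W) : restrictStar K S W = K := by
  ext σ
  simp only [mem_restrictStar, and_iff_left_iff_imp]
  exact h σ

lemma mem_restrictStar_of_subset (hσ : σ ∈ restrictStar K S W) (hτσ : τ ⊆ σ) (hτ : τ ∈ K) :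
    τ ∈ restrictStar K S W := by
  rw [mem_restrictStar] at hσ ⊢
  exact ⟨hτ, fun hSτ => (Finset.coe_subset.2 hτσ).trans (hσ.2 (hSτ.trans hτσ))⟩

lemma insert_mem_restrictStar (hσ : σ ∈ restrictStar K S W) (hSσ : S ⊆ σ) (hc : c ∈ W)
    (hcσ : insert c σ ∈ K) : insert c σ ∈ restrictStar K S W := by
  rw [mem_restrictStar] at hσ ⊢
  refine ⟨hcσ, fun _ => ?_⟩
  rw [Finset.coe_insert]
  exact Set.insert_subset (Or.inr hc) (hσ.2 hSσ)

lemma filter_not_superset_restrictStar :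
    (restrictStar K S W).filter (fun σ => ¬ S ⊆ σ) = K.filter fun σ => ¬ S ⊆ σ := by
  ext σ
  simp only [Finset.mem_filter, mem_restrictStar]
  tauto

lemma filter_not_insert_subset_restrictStar {b : V} (hb : b ∉ S) :
    (restrictStar K S W).filter (fun σ => ¬ insert b S ⊆ σ) = restrictStar K S (W \ {b}) := by
  ext σ
  simp only [Finset.mem_filter, mem_restrictStar, Finset.insert_subset_iff]
  constructor
  · rintro ⟨⟨hσK, hσW⟩, hbσ⟩
    refine ⟨hσK, fun hSσ u hu => ?_⟩
    rcases hσW hSσ hu with huS | huW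
    · exact Or.inl huS
    · exact Or.inr ⟨huW, fun h => hbσ ⟨(Set.mem_singleton_iff.1 h) ▸ hu, hSσ⟩⟩
  · rintro ⟨hσK, hσW⟩
    refine ⟨⟨hσK, fun hSσ => (hσW hSσ).trans (Set.union_subset_union_right _ Set.sdiff_subset)⟩,
      fun ⟨hbσ, hSσ⟩ => ?_⟩
    rcases hσW hSσ hbσ with hbS | hbW
    exacts [hb hbS, hbW.2 rfl]

end SimplicialComplex

lemma ContractibleSpace.of_retraction {Y Z : Type*} [TopologicalSpace Y] [TopologicalSpace Z]
    [ContractibleSpace Z] (i : C(Y, Z)) (r : C(Z, Y)) (hri : r.comp i = ContinuousMap.id Y) :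
    ContractibleSpace Y := by
  rw [contractible_iff_id_nullhomotopic, ← hri]
  exact ((id_nullhomotopic Z).comp_right r).comp_left i

section BeatPoints

open Topology unitInterval

/-- Equivalently, `Iio b` has a greatest element or `Ioi b` has a least element (namely `c`). -/
def IsBeatPoint {Y : Type*} [Preorder Y] (b : Y) : Prop :=
  ∃ c, c ≠ b ∧ SymmGen (· ≤ ·) c b ∧ Set.Iio b ⊆ Set.Iic c ∧ Set.Ioi b ⊆ Set.Ici c

variable {Y : Type*} [PartialOrder Y]

lemma isBeatPoint_toDual {b : Y} : IsBeatPoint (OrderDual.toDual b) ↔ IsBeatPoint b :=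
  ⟨fun ⟨c, hcb, hcomp, hlt, hgt⟩ => ⟨c, hcb, hcomp.symm, hgt, hlt⟩,
    fun ⟨c, hcb, hcomp, hlt, hgt⟩ => ⟨c, hcb, hcomp.symm, hgt, hlt⟩⟩

lemma IsBeatPoint.exists_dominating {b : Y} (hb : IsBeatPoint b) :
    ∃ c, c ≠ b ∧ ∀ u, SymmGen (· ≤ ·) u b → SymmGen (· ≤ ·) u c := by
  obtain ⟨c, hcb, hc, hlt, hgt⟩ := hb
  refine ⟨c, hcb, fun u hu => ?_⟩
  rcases eq_or_ne u b with rfl | hub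
  · exact hc.symm
  rcases hu with hu | hu
  exacts [.of_le (hlt (hu.lt_of_ne hub)), .of_ge (hgt (hu.lt_of_ne' hub))]

section LowerSetTopology

variable [TopologicalSpace Y] [Topology.IsLowerSet Y]

instance Topology.IsLowerSet.subtype (U : Set Y) : Topology.IsLowerSet U :=
  Topology.isLowerSet_iff_nhds.2 fun a => by
    rw [nhds_subtype, IsLowerSet.nhds_eq_principal_Iic, Filter.comap_principal]
    rfl

lemma IsBeatPoint.contractibleSpace_diff {U : Set Y} [ContractibleSpace U] {b : U}
    (hb : IsBeatPoint b) : ContractibleSpace ↥(U \ {(b : Y)}) := by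
  classical
  obtain ⟨c, hcb, -, hlt, hgt⟩ := hb
  let r : U → ↥(U \ {(b : Y)}) := fun u =>
    if h : u = b then ⟨c, c.2, fun h' => hcb (Subtype.ext h')⟩
    else ⟨u, u.2, fun h' => h (Subtype.ext h')⟩
  have hr : Monotone r := by
    intro u v huv
    simp only [r]
    split_ifs with hu hv hv
    · exact le_rfl
    · subst hu; exact hgt (huv.lt_of_ne (Ne.symm hv))
    · subst hv; exact hlt (huv.lt_of_ne hu)
    · exact huv
  refine ContractibleSpace.of_retraction (Z := U)
    ⟨Set.inclusion Set.sdiff_subset, IsLowerSet.monotone_iff_continuous.1 fun _ _ h => h⟩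
    ⟨r, IsLowerSet.monotone_iff_continuous.1 hr⟩ ?_
  ext u
  have hu : (⟨u, u.2.1⟩ : U) ≠ b := fun h => u.2.2 (congrArg Subtype.val h)
  simp [r, Set.inclusion, hu]

end LowerSetTopology

variable [Finite Y]

lemma OrderHom.eq_id_of_le_id (hY : ∀ b : Y, ¬ IsBeatPoint b) {f : Y →o Y}
    (hf : f ≤ OrderHom.id) : f = OrderHom.id := by
  by_contra hne
  obtain ⟨m, hm, hmin⟩ : ∃ m, f m ≠ m ∧ ∀ u < m, f u = u := by
    obtain ⟨a, ha⟩ : ∃ a, f a ≠ a := by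
      by_contra! h
      exact hne (OrderHom.ext _ _ (funext h))
    obtain ⟨m, hm⟩ := (Set.toFinite {a | f a ≠ a}).exists_minimal ⟨a, ha⟩
    exact ⟨m, hm.1, fun u hu => by_contra fun h => hm.not_lt h hu⟩
  have hfm : f m < m := (hf m).lt_of_ne hm
  refine hY m ⟨f m, hm, .of_le hfm.le, fun u hu => ?_, fun v hv => hfm.le.trans hv.le⟩
  exact (hmin u hu).symm.le.trans (f.monotone (le_of_lt hu))

lemma OrderHom.eq_id_of_id_le (hY : ∀ b : Y, ¬ IsBeatPoint b) {f : Y →o Y}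
    (hf : OrderHom.id ≤ f) : f = OrderHom.id := by
  have hdual : OrderHom.dual f ≤ OrderHom.id := fun a => hf (OrderDual.ofDual a)
  have := OrderHom.eq_id_of_le_id
    (fun b => isBeatPoint_toDual.not.2 (hY (OrderDual.ofDual b))) hdual
  ext a
  exact congrArg (fun g : Yᵒᵈ →o Yᵒᵈ => g (OrderDual.toDual a)) this

/-- Slices of a contracting homotopy at nearby times are pointwise below each other, because
`Iic a` is open; connectedness of the unit interval does the rest. -/
lemma exists_eqvGen_id_const [TopologicalSpace Y] [Topology.IsLowerSet Y] [ContractibleSpace Y] :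
    ∃ y₀ : Y, EqvGen (· ≤ ·) OrderHom.id (OrderHom.const Y y₀) := by
  obtain ⟨y₀, ⟨H⟩⟩ := (contractible_iff_id_nullhomotopic Y).1 ‹_›
  let slice (t : I) : Y →o Y :=
    ⟨fun a => H (t, a), IsLowerSet.monotone_iff_continuous.2 (by fun_prop)⟩
  have hlocal : ∀ s, ∀ᶠ t in 𝓝 s, slice t ≤ slice s := fun s =>
    Filter.eventually_all.2 fun a => (show Continuous fun t => H (t, a) by fun_prop).continuousAt
      (IsLowerSet.isOpen_iff_isLowerSet.2 (isLowerSet_Iic _) |>.mem_nhds le_rfl)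
  have := PreconnectedSpace.induction₂' (fun s t => EqvGen (· ≤ ·) (slice s) (slice t))
    (fun s => (hlocal s).mono fun t ht => ⟨(EqvGen.rel _ _ ht).symm, EqvGen.rel _ _ ht⟩)
    ⟨fun _ _ _ => EqvGen.trans _ _ _⟩ 0 1
  refine ⟨y₀, ?_⟩
  convert this using 1 <;> ext a <;> simp [slice]

lemma subsingleton_of_forall_not_isBeatPoint [TopologicalSpace Y] [Topology.IsLowerSet Y]
    [ContractibleSpace Y] (hY : ∀ b : Y, ¬ IsBeatPoint b) : Subsingleton Y := by
  have hfence : ∀ f g : Y →o Y, EqvGen (· ≤ ·) f g → (f = OrderHom.id ↔ g = OrderHom.id) := by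
    intro f g hfg
    induction hfg with
    | rel f g hfg =>
      constructor
      · rintro rfl; exact OrderHom.eq_id_of_id_le hY hfg
      · rintro rfl; exact OrderHom.eq_id_of_le_id hY hfg
    | refl => rfl
    | symm _ _ _ ih => exact ih.symm
    | trans _ _ _ _ _ ih₁ ih₂ => exact ih₁.trans ih₂
  obtain ⟨y₀, hy₀⟩ := exists_eqvGen_id_const (Y := Y)
  have hconst := (hfence _ _ hy₀).1 rfl
  exact ⟨fun a b => (congrArg (· a) hconst).symm.trans (congrArg (· b) hconst)⟩

end BeatPoints

section Dismantling

variable {X : Type*} [PartialOrder X]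

def BeatRemoval (U V : Set X) : Prop :=
  ∃ b : U, IsBeatPoint b ∧ V = U \ {(b : X)}

lemma BeatRemoval.subset {U V : Set X} (h : BeatRemoval U V) : V ⊆ U := by
  obtain ⟨b, -, rfl⟩ := h
  exact Set.sdiff_subset

theorem SubContractible.exists_reflTransGen_beatRemoval [Finite X] {U : Set X}
    (hU : SubContractible U) : ∃ w ∈ U, ReflTransGen BeatRemoval U {w} := by
  let := downTop X
  have : Topology.IsLowerSet X := ⟨rfl⟩
  induction hn : U.ncard using Nat.strong_induction_on generalizing U with
  | _ n ih =>
  have : ContractibleSpace U := hU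
  by_cases hbeat : ∃ b : U, IsBeatPoint b
  · obtain ⟨b, hb⟩ := hbeat
    obtain ⟨w, hw, hrest⟩ := ih _ (hn ▸ Set.ncard_sdiff_singleton_lt_of_mem b.2)
      hb.contractibleSpace_diff rfl
    exact ⟨w, hw.1, .head ⟨b, hb, rfl⟩ hrest⟩
  · push Not at hbeat
    have := subsingleton_of_forall_not_isBeatPoint hbeat
    obtain ⟨w⟩ := (inferInstance : Nonempty U)
    have hUw : U = {(w : X)} :=
      Set.eq_singleton_iff_unique_mem.2 ⟨w.2, fun u hu => congrArg Subtype.val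
        (Subsingleton.elim (⟨u, hu⟩ : U) w)⟩
    exact ⟨w, w.2, hUw ▸ .refl⟩

end Dismantling

section OrderComplex

variable {X : Type*} [PartialOrder X]

def link (x : X) : Set X := {y | y < x ∨ x < y}

lemma ne_of_mem_link {x y : X} (h : y ∈ link x) : y ≠ x := by
  rintro rfl; exact h.elim (lt_irrefl y) (lt_irrefl y)

lemma symmGen_of_mem_link {x y : X} (h : y ∈ link x) : SymmGen (· ≤ ·) y x :=
  h.imp le_of_lt le_of_lt

lemma IsChain.subset_insert_link {σ : Set X} (hσ : IsChain (· ≤ ·) σ) {x : X} (hx : x ∈ σ) :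
    σ ⊆ insert x (link x) := fun u hu => by
  rcases eq_or_ne u x with rfl | hux
  · exact Set.mem_insert u _
  · exact Or.inr ((hσ hu hx hux).imp (·.lt_of_ne hux) (·.lt_of_ne hux.symm))

lemma IsWeakPointIn.exists_split {A : Set X} {z : X} (hz : IsWeakPointIn A z) :
    ∃ U F : Set X, SubContractible U ∧ U ∪ F = A ∩ link z ∧ Disjoint U F ∧
      ∀ u ∈ U, ∀ v ∈ F, SymmGen (· ≤ ·) u v := by
  have hunion : {y | y ∈ A ∧ y < z} ∪ {y | y ∈ A ∧ z < y} = A ∩ link z := by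
    ext u; simp only [link, Set.mem_union, Set.mem_ofPred_eq, Set.mem_inter_iff]; tauto
  have hdisj : Disjoint {y | y ∈ A ∧ y < z} {y | y ∈ A ∧ z < y} :=
    Set.disjoint_left.2 fun u hu hu' => lt_asymm hu.2 hu'.2
  rcases hz.2 with hD | hF
  · exact ⟨_, _, hD, hunion, hdisj, fun u hu v hv => .of_le (hu.2.trans hv.2).le⟩
  · exact ⟨_, _, hF, Set.union_comm _ _ ▸ hunion, hdisj.symm,
      fun u hu v hv => .of_ge (hv.2.trans hu.2).le⟩

variable [Fintype X]

@[simp]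
lemma mem_orderComplexIn {A : Set X} {σ : Finset X} :
    σ ∈ orderComplexIn X A ↔ σ.Nonempty ∧ IsChain (· ≤ ·) (σ : Set X) ∧ ↑σ ⊆ A := by
  simp [orderComplexIn]

lemma mem_orderComplexIn_of_subset {A : Set X} {σ τ : Finset X} (hσ : σ ∈ orderComplexIn X A)
    (hτσ : τ ⊆ σ) (hτ : τ.Nonempty) : τ ∈ orderComplexIn X A := by
  obtain ⟨-, hchain, hσA⟩ := mem_orderComplexIn.1 hσ
  exact mem_orderComplexIn.2 ⟨hτ, hchain.mono hτσ, (Finset.coe_subset.2 hτσ).trans hσA⟩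

variable [DecidableEq X]

lemma insert_mem_orderComplexIn {A : Set X} {σ : Finset X} {c : X}
    (hσ : σ ∈ orderComplexIn X A) (hcA : c ∈ A) (hc : ∀ u ∈ σ, SymmGen (· ≤ ·) c u) :
    insert c σ ∈ orderComplexIn X A := by
  obtain ⟨-, hchain, hσA⟩ := mem_orderComplexIn.1 hσ
  rw [mem_orderComplexIn, Finset.coe_insert]
  exact ⟨Finset.insert_nonempty c σ, hchain.insert fun u hu _ => hc u hu,
    Set.insert_subset hcA hσA⟩

lemma filter_not_mem_orderComplexIn_univ (x : X) :
    (orderComplexIn X Set.univ).filter (fun σ => ¬ {x} ⊆ σ) = orderComplexIn X {x}ᶜ := by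
  ext σ
  simp [Set.subset_def, and_assoc]

lemma restrictStar_link_eq_self (x : X) :
    restrictStar (orderComplexIn X Set.univ) {x} (link x) = orderComplexIn X Set.univ :=
  restrictStar_eq_self fun σ hσ hxσ => by
    simpa using (mem_orderComplexIn.1 hσ).2.1.subset_insert_link
      (Finset.singleton_subset_iff.1 hxσ)

lemma sCollapses_restrictStar_singleton {x y : X} (hy : y ∈ link x) :
    SCollapses (restrictStar (orderComplexIn X Set.univ) {x} {y}) (orderComplexIn X {x}ᶜ) := by
  have hcone : StarIsCone (restrictStar (orderComplexIn X Set.univ) {x} {y}) {x} y := by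
    intro σ hσ hxσ
    have hσxy := (mem_restrictStar.1 hσ).2 hxσ
    refine ⟨insert_mem_restrictStar hσ hxσ rfl
      (insert_mem_orderComplexIn (mem_restrictStar.1 hσ).1 trivial fun u hu => ?_),
      mem_restrictStar_of_subset hσ (Finset.erase_subset y σ)
        (mem_orderComplexIn_of_subset (mem_restrictStar.1 hσ).1 (Finset.erase_subset y σ) ?_)⟩
    · rcases hσxy hu with hux | rfl
      · rw [Finset.mem_coe, Finset.mem_singleton] at hux
        rw [hux]
        exact symmGen_of_mem_link hy
      · exact .of_le le_rfl
    · exact ⟨x, Finset.mem_erase.2 ⟨(ne_of_mem_link hy).symm, Finset.singleton_subset_iff.1 hxσ⟩⟩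
  have := hcone.sCollapses (by simpa using (ne_of_mem_link hy))
  rwa [filter_not_superset_restrictStar, filter_not_mem_orderComplexIn_univ] at this

lemma starIsCone_restrictStar_restrictStar {x z c : X} {A W : Set X} {S : Finset X}
    (hS : {z, x} ⊆ S) (hcS : c ∉ S) (hcA : c ∈ A) (hcW : c ∈ W)
    (hc : ∀ u ∈ (↑({z, x} : Finset X) ∪ W : Set X),
      (∀ s ∈ S, SymmGen (· ≤ ·) u s) → SymmGen (· ≤ ·) c u) :
    StarIsCone (restrictStar (restrictStar (orderComplexIn X Set.univ) {x} A) {z, x} W) S c := by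
  intro σ hσ hSσ
  have hσ₁ := (mem_restrictStar.1 hσ).1
  have hσ₀ := (mem_restrictStar.1 hσ₁).1
  have hzxσ : {z, x} ⊆ σ := hS.trans hSσ
  have hxσ : x ∈ σ := hzxσ (by simp)
  have hchain := (mem_orderComplexIn.1 hσ₀).2.1
  refine ⟨insert_mem_restrictStar hσ hzxσ hcW <| insert_mem_restrictStar hσ₁
    (Finset.singleton_subset_iff.2 hxσ) hcA <| insert_mem_orderComplexIn hσ₀ trivial
      fun u hu => hc u ((mem_restrictStar.1 hσ).2 hzxσ hu) fun s hs => hchain.total hu (hSσ hs),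
    mem_restrictStar_of_subset hσ (Finset.erase_subset c σ) <|
      mem_restrictStar_of_subset hσ₁ (Finset.erase_subset c σ) <|
        mem_orderComplexIn_of_subset hσ₀ (Finset.erase_subset c σ) ⟨x, ?_⟩⟩
  exact Finset.mem_erase.2 ⟨fun h => hcS (h ▸ hS (by simp)), hxσ⟩

lemma restrictStar_inter_link_eq (x z : X) (A : Set X) :
    restrictStar (restrictStar (orderComplexIn X Set.univ) {x} A) {z, x} (A ∩ link z) =
      restrictStar (orderComplexIn X Set.univ) {x} A := by
  refine restrictStar_eq_self fun σ hσ hzxσ u hu => ?_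
  obtain ⟨hσ₀, hσA⟩ := mem_restrictStar.1 hσ
  have hzσ : z ∈ σ := hzxσ (Finset.mem_insert_self z {x})
  have hxσ : x ∈ σ := hzxσ (Finset.mem_insert_of_mem (Finset.mem_singleton_self x))
  by_cases huzx : u ∈ ({z, x} : Finset X)
  · exact Or.inl huzx
  simp only [Finset.mem_insert, Finset.mem_singleton, not_or] at huzx
  have huA := hσA (Finset.singleton_subset_iff.2 hxσ) hu
  have hulink := (mem_orderComplexIn.1 hσ₀).2.1.subset_insert_link hzσ hu
  exact Or.inr ⟨huA.resolve_left (by simpa using huzx.2), hulink.resolve_left huzx.1⟩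

lemma sCollapses_restrictStar_of_beatRemoval {x z : X} {A U V F : Set X}
    (hUV : BeatRemoval U V) (hA : A ⊆ link x) (hU : U ⊆ A ∩ link z) (hdisj : Disjoint U F)
    (hcross : ∀ u ∈ U, ∀ v ∈ F, SymmGen (· ≤ ·) u v) :
    SCollapses (restrictStar (restrictStar (orderComplexIn X Set.univ) {x} A) {z, x} (U ∪ F))
      (restrictStar (restrictStar (orderComplexIn X Set.univ) {x} A) {z, x} (V ∪ F)) := by
  obtain ⟨b, hb, rfl⟩ := hUV
  obtain ⟨c, hcb, hdom⟩ := hb.exists_dominating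
  obtain ⟨hbA, hbz⟩ := hU b.2
  obtain ⟨hcA, hcz⟩ := hU c.2
  have hbS : (b : X) ∉ ({z, x} : Finset X) := by
    simpa using ⟨ne_of_mem_link hbz, ne_of_mem_link (hA hbA)⟩
  have hcS : (c : X) ∉ insert (b : X) ({z, x} : Finset X) := by
    simpa using ⟨fun h => hcb (Subtype.ext h), ne_of_mem_link hcz, ne_of_mem_link (hA hcA)⟩
  have hcone := starIsCone_restrictStar_restrictStar (Finset.subset_insert (b : X) {z, x}) hcS
    hcA (Set.mem_union_left F c.2) fun u hu hS => ?_
  · have := hcone.sCollapses hcS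
    rwa [filter_not_insert_subset_restrictStar hbS, Set.union_sdiff_distrib,
      Set.sdiff_singleton_eq_self (hdisj.notMem_of_mem_left b.2)] at this
  · simp only [Finset.coe_insert, Finset.coe_singleton, Set.mem_union, Set.mem_insert_iff,
      Set.mem_singleton_iff] at hu
    rcases hu with (rfl | rfl) | hu | hu
    · exact symmGen_of_mem_link hcz
    · exact symmGen_of_mem_link (hA hcA)
    · exact (hdom ⟨u, hu⟩ (hS b (Finset.mem_insert_self _ _))).symm
    · exact hcross c c.2 u hu

lemma sCollapses_restrictStar_of_reflTransGen_beatRemoval {x z : X} {A U V F : Set X}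
    (hUV : ReflTransGen BeatRemoval U V) (hA : A ⊆ link x) (hU : U ⊆ A ∩ link z)
    (hdisj : Disjoint U F) (hcross : ∀ u ∈ U, ∀ v ∈ F, SymmGen (· ≤ ·) u v) :
    SCollapses (restrictStar (restrictStar (orderComplexIn X Set.univ) {x} A) {z, x} (U ∪ F))
      (restrictStar (restrictStar (orderComplexIn X Set.univ) {x} A) {z, x} (V ∪ F)) := by
  induction hUV using ReflTransGen.head_induction_on with
  | refl => exact .refl
  | head hstep _ ih =>
    have hsub := hstep.subset
    exact (sCollapses_restrictStar_of_beatRemoval hstep hA hU hdisj hcross).trans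
      (ih (hsub.trans hU) (hdisj.mono_left hsub) fun u hu => hcross u (hsub hu))

lemma sCollapses_restrictStar_singleton_union {x z w : X} {A F : Set X} (hA : A ⊆ link x)
    (hz : z ∈ A) (hw : w ∈ A ∩ link z) (hcross : ∀ v ∈ F, SymmGen (· ≤ ·) w v) :
    SCollapses (restrictStar (restrictStar (orderComplexIn X Set.univ) {x} A) {z, x} ({w} ∪ F))
      (restrictStar (orderComplexIn X Set.univ) {x} (A \ {z})) := by
  have hwS : w ∉ ({z, x} : Finset X) := by
    simpa using ⟨ne_of_mem_link hw.2, ne_of_mem_link (hA hw.1)⟩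
  have hcone := starIsCone_restrictStar_restrictStar subset_rfl hwS hw.1
    (Set.mem_union_left F (Set.mem_singleton w)) fun u hu _ => ?_
  · have := hcone.sCollapses hwS
    have hzx : z ∉ ({x} : Finset X) := by simpa using ne_of_mem_link (hA hz)
    rwa [filter_not_superset_restrictStar, filter_not_insert_subset_restrictStar hzx] at this
  · simp only [Finset.coe_insert, Finset.coe_singleton, Set.mem_union, Set.mem_insert_iff,
      Set.mem_singleton_iff] at hu
    rcases hu with (rfl | rfl) | rfl | hu
    · exact symmGen_of_mem_link hw.2
    · exact symmGen_of_mem_link (hA hw.1)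
    · exact .of_le le_rfl
    · exact hcross u hu

theorem sCollapses_restrictStar_sdiff_of_isWeakPointIn {x z : X} {A : Set X} (hA : A ⊆ link x)
    (hz : IsWeakPointIn A z) :
    SCollapses (restrictStar (orderComplexIn X Set.univ) {x} A)
      (restrictStar (orderComplexIn X Set.univ) {x} (A \ {z})) := by
  obtain ⟨U, F, hU, hUF, hdisj, hcross⟩ := hz.exists_split
  obtain ⟨w, hwU, hUw⟩ := hU.exists_reflTransGen_beatRemoval
  have hUA : U ⊆ A ∩ link z := hUF ▸ Set.subset_union_left
  rw [← restrictStar_inter_link_eq x z, ← hUF]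
  exact (sCollapses_restrictStar_of_reflTransGen_beatRemoval hUw hA hUA hdisj hcross).trans
    (sCollapses_restrictStar_singleton_union hA hz.1 (hUA hwU) (hcross w hwU))

theorem sCollapses_restrictStar_of_spaceCollapses {x : X} {A B : Set X}
    (hAB : SpaceCollapses A B) (hA : A ⊆ link x) :
    SCollapses (restrictStar (orderComplexIn X Set.univ) {x} A)
      (restrictStar (orderComplexIn X Set.univ) {x} B) := by
  induction hAB using ReflTransGen.head_induction_on with
  | refl => exact .refl
  | head hstep _ ih =>
    obtain ⟨z, hz, rfl⟩ := hstep
    exact (sCollapses_restrictStar_sdiff_of_isWeakPointIn hA hz).trans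
      (ih (Set.sdiff_subset.trans hA))

end OrderComplex

theorem orderComplex_collapses_of_link_collapsible (X : Type) [PartialOrder X] [Fintype X]
    [DecidableEq X] (x : X) (h : SpaceCollapsible {y : X | y < x ∨ x < y}) :
    SCollapses (orderComplexIn X Set.univ) (orderComplexIn X {x}ᶜ) := by
  obtain ⟨y, hy, hcollapse⟩ := h
  rw [← restrictStar_link_eq_self x]
  exact (sCollapses_restrictStar_of_spaceCollapses hcollapse subset_rfl).trans
    (sCollapses_restrictStar_singleton hy)
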